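/- arXiv:1307.6951 — 3 statements merged into one kernel-verified Lean document; each statement's English description precedes it below -/
import Mathlib

section
/- Let s ∈ (0,1), a = 1/(2−s), and suppose a nonnegative measurable function w on a domain Ω satisfies (∫_Ω w dx)² ≥ K ∫_Ω w² dx for some K > 0. Then ∫_Ω w dx ≤ K^{−(1−s)/s} (∫_Ω w^s dx)^{1/s}. -/
/-!
Since `s * a + 2 * (1 - a) = 1`, Hölder's inequality with exponents `1 / a` and `1 / (1 - a)`
interpolates `∫ w` between `∫ w ^ s` and `∫ w ^ 2`. The reverse constraint bounds `∫ w ^ 2` by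
`(∫ w) ^ 2 / K`, and solving the resulting inequality for `∫ w` gives the claim.
-/

namespace MeasureTheory

variable {α : Type*} [MeasurableSpace α] {μ : Measure α}

theorem Integrable.memLp_rpow_of_nonneg {f : α → ℝ} (hf : Integrable f μ) (hf0 : 0 ≤ᵐ[μ] f)
    {θ : ℝ} (hθ : 0 < θ) : MemLp (fun x => f x ^ θ) (ENNReal.ofReal θ⁻¹) μ := by
  have h := (memLp_one_iff_integrable.2 hf).norm_rpow_div (ENNReal.ofReal θ)
  rw [ENNReal.toReal_ofReal hθ.le, one_div, ← ENNReal.ofReal_inv_of_pos hθ] at h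
  refine h.ae_eq ?_
  filter_upwards [hf0] with x hx
  rw [Real.norm_of_nonneg hx]

theorem integral_rpow_mul_rpow_le {f g : α → ℝ} (hf0 : 0 ≤ᵐ[μ] f) (hg0 : 0 ≤ᵐ[μ] g)
    (hf : Integrable f μ) (hg : Integrable g μ) {θ : ℝ} (hθ0 : 0 < θ) (hθ1 : θ < 1) :
    ∫ x, f x ^ θ * g x ^ (1 - θ) ∂μ ≤ (∫ x, f x ∂μ) ^ θ * (∫ x, g x ∂μ) ^ (1 - θ) := by
  have hθ1' : 0 < 1 - θ := sub_pos.2 hθ1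
  have hHolder := integral_mul_le_Lp_mul_Lq_of_nonneg
    (Real.HolderConjugate.inv_one_sub_inv hθ0 hθ1)
    (hf0.mono fun x hx => Real.rpow_nonneg hx θ) (hg0.mono fun x hx => Real.rpow_nonneg hx _)
    (hf.memLp_rpow_of_nonneg hf0 hθ0) (hg.memLp_rpow_of_nonneg hg0 hθ1')
  have hf_eq : ∫ x, (f x ^ θ) ^ θ⁻¹ ∂μ = ∫ x, f x ∂μ :=
    integral_congr_ae <| hf0.mono fun x hx => Real.rpow_rpow_inv hx hθ0.ne'
  have hg_eq : ∫ x, (g x ^ (1 - θ)) ^ (1 - θ)⁻¹ ∂μ = ∫ x, g x ∂μ :=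
    integral_congr_ae <| hg0.mono fun x hx => Real.rpow_rpow_inv hx hθ1'.ne'
  rwa [hf_eq, hg_eq, one_div, one_div, inv_inv, inv_inv] at hHolder

/-- Lyapunov's inequality: `p ↦ log ∫ w ^ p` is convex. -/
theorem integral_rpow_convex_comb_le {w : α → ℝ} (hw : 0 ≤ᵐ[μ] w) {p q θ r : ℝ}
    (hp : 0 ≤ p) (hq : 0 ≤ q) (hθ0 : 0 < θ) (hθ1 : θ < 1) (hr : θ * p + (1 - θ) * q = r)
    (hwp : Integrable (fun x => w x ^ p) μ) (hwq : Integrable (fun x => w x ^ q) μ) :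
    ∫ x, w x ^ r ∂μ ≤ (∫ x, w x ^ p ∂μ) ^ θ * (∫ x, w x ^ q ∂μ) ^ (1 - θ) := by
  have hsplit : ∫ x, w x ^ r ∂μ = ∫ x, (w x ^ p) ^ θ * (w x ^ q) ^ (1 - θ) ∂μ := by
    refine integral_congr_ae (hw.mono fun x (hx : 0 ≤ w x) => ?_)
    dsimp only
    rw [← Real.rpow_mul hx, ← Real.rpow_mul hx, ← Real.rpow_add_of_nonneg hx
      (by positivity) (mul_nonneg hq (sub_pos.2 hθ1).le), ← hr]
    ring_nf
  rw [hsplit]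
  exact integral_rpow_mul_rpow_le (hw.mono fun x hx => Real.rpow_nonneg hx p)
    (hw.mono fun x hx => Real.rpow_nonneg hx q) hwp hwq hθ0 hθ1

end MeasureTheory

open MeasureTheory

theorem le_rpow_of_interpolation_of_reverse_constraint {s K I A B : ℝ} (hs : 0 < s)
    (hs1 : s ≤ 1) (hK : 0 < K) (hI : 0 ≤ I) (hA : 0 ≤ A) (hB : 0 ≤ B)
    (hIAB : I ≤ A ^ (1 / (2 - s)) * B ^ (1 - 1 / (2 - s))) (hKB : K * B ≤ I ^ 2) :
    I ≤ K ^ (-(1 - s) / s) * A ^ (1 / s) := by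
  rcases hI.eq_or_lt with rfl | hI0
  · positivity
  have h2s : 0 < 2 - s := by linarith
  have hIAB' : I ^ (2 - s) ≤ A * B ^ (1 - s) := by
    calc I ^ (2 - s) ≤ (A ^ (1 / (2 - s)) * B ^ (1 - 1 / (2 - s))) ^ (2 - s) :=
          Real.rpow_le_rpow hI hIAB h2s.le
      _ = A * B ^ (1 - s) := by
          rw [Real.mul_rpow (by positivity) (by positivity), ← Real.rpow_mul hA,
            ← Real.rpow_mul hB, one_div_mul_cancel h2s.ne', Real.rpow_one]
          congr 2
          field_simp
          ring
  have hB_le : B ^ (1 - s) ≤ (I ^ 2 / K) ^ (1 - s) :=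
    Real.rpow_le_rpow hB ((le_div_iff₀' hK).2 hKB) (sub_nonneg.2 hs1)
  have hIs : I ^ s ≤ A * K ^ (-(1 - s)) := by
    have hpos : 0 < I ^ (2 * (1 - s)) := Real.rpow_pos_of_pos hI0 _
    refine le_of_mul_le_mul_right ?_ hpos
    calc I ^ s * I ^ (2 * (1 - s)) = I ^ (2 - s) := by
          rw [← Real.rpow_add hI0]; ring_nf
      _ ≤ A * (I ^ 2 / K) ^ (1 - s) := hIAB'.trans (mul_le_mul_of_nonneg_left hB_le hA)
      _ = A * K ^ (-(1 - s)) * I ^ (2 * (1 - s)) := by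
          rw [Real.div_rpow (by positivity) hK.le, Real.rpow_neg hK.le, ← Real.rpow_natCast,
            ← Real.rpow_mul hI]
          push_cast
          ring
  calc I = (I ^ s) ^ (1 / s) := by rw [one_div, Real.rpow_rpow_inv hI hs.ne']
    _ ≤ (A * K ^ (-(1 - s))) ^ (1 / s) := Real.rpow_le_rpow (by positivity) hIs (by positivity)
    _ = K ^ (-(1 - s) / s) * A ^ (1 / s) := by
        rw [Real.mul_rpow hA (by positivity), ← Real.rpow_mul hK.le, mul_comm, mul_one_div]

theorem reverse_constraint_interpolation_general {Ω : Type*} [MeasurableSpace Ω] (μ : Measure Ω)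
    (w : Ω → ℝ) (s K : ℝ) (hs : 0 < s) (hs1 : s < 1) (hK : 0 < K)
    (hw : ∀ x, 0 ≤ w x)
    (h2 : Integrable (fun x => (w x) ^ 2) μ)
    (hs' : Integrable (fun x => (w x) ^ s) μ)
    (hconstraint : K * ∫ x, (w x) ^ 2 ∂μ ≤ (∫ x, w x ∂μ) ^ 2) :
    ∫ x, w x ∂μ ≤ K ^ (-(1 - s) / s) * (∫ x, (w x) ^ s ∂μ) ^ (1 / s) := by
  have h2s : 0 < 2 - s := by linarith
  have hHolder := integral_rpow_convex_comb_le (μ := μ) (.of_forall hw) hs.le zero_le_two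
    (one_div_pos.2 h2s) ((div_lt_one h2s).2 (by linarith)) (r := 1) (by field_simp; ring)
    hs' (by simpa only [Real.rpow_two] using h2)
  simp only [Real.rpow_one, Real.rpow_two] at hHolder
  exact le_rpow_of_interpolation_of_reverse_constraint hs hs1.le hK (integral_nonneg hw)
    (integral_nonneg fun x => Real.rpow_nonneg (hw x) s) (integral_nonneg fun x => sq_nonneg _)
    hHolder hconstraint

theorem reverse_constraint_interpolation {Ω : Type*} [MeasurableSpace Ω] (μ : Measure Ω)
    (w : Ω → ℝ) (s a K : ℝ) (hs : 0 < s) (hs1 : s < 1) (ha : a = 1 / (2 - s)) (hK : 0 < K)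
    (hw : ∀ x, 0 ≤ w x) (hmeas : AEMeasurable w μ)
    (h1 : Integrable w μ) (h2 : Integrable (fun x => (w x) ^ 2) μ)
    (hs' : Integrable (fun x => (w x) ^ s) μ)
    (hconstraint : K * ∫ x, (w x) ^ 2 ∂μ ≤ (∫ x, w x ∂μ) ^ 2) :
    ∫ x, w x ∂μ ≤ K ^ (-(1 - s) / s) * (∫ x, (w x) ^ s ∂μ) ^ (1 / s) :=
  reverse_constraint_interpolation_general μ w s K hs hs1 hK hw h2 hs' hconstraint
end

section
/- Let D₁, D₂, K₁, K₂, H > 0 and 0 < γ < 1 with γ²H² < D₁D₂, and A, B > 0. Define Q₁(Y) = A + γHY, Q₂(X) = B + γHX, and assume A² ≥ 4K₁D₁ and B² ≥ 4K₂D₂. Define g₁(Y) = (Q₁(Y)+√(Q₁(Y)²−4K₁D₁))/(2D₁), g₂(X) = (Q₂(X)+√(Q₂(X)²−4K₂D₂))/(2D₂), and F(X) = X − g₁(g₂(X)) for X ≥ 0. Then F(0) < 0 and F(X)/X → 1 − γ²H²/(D₁D₂) > 0 as X → +∞, so F has at least one positive zero; moreover X ↦ F(X)/X is strictly increasing on (0,∞),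 so the positive zero of F is unique. -/
/-!
Each `gᵢ` is the larger root of a quadratic whose linear coefficient grows linearly, so
`gᵢ(x) / x = sᵢ(1 / x)` for an explicit function `sᵢ` that is continuous and strictly increasing
on `[0, ∞)` with `sᵢ(0) = γH / Dᵢ`. Hence `gᵢ(x) / x` decreases strictly to `γH / Dᵢ`, and
writing `g₁(g₂ x) / x = (g₁(g₂ x) / g₂ x) · (g₂ x / x)` the same holds for the composite with
limit `γ²H² / (D₁D₂) < 1`. So `F(x) / x = 1 - g₁(g₂ x) / x` increases strictly to a positive
limit; since `F(0) < 0`, the intermediate value theorem gives a positive zero, and strict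
monotonicity of `F(x) / x` makes it unique.
-/

open Filter Set Topology

section Composition

variable {f g : ℝ → ℝ}

theorem tendsto_comp_div_atTop {p q : ℝ} (hp : 0 < p)
    (hf : Tendsto (fun x => f x / x) atTop (𝓝 p))
    (hg : Tendsto (fun y => g y / y) atTop (𝓝 q)) :
    Tendsto (fun x => g (f x) / x) atTop (𝓝 (q * p)) := by
  have hf_atTop : Tendsto f atTop atTop := Tendsto.num tendsto_id hp hf
  refine ((hg.comp hf_atTop).mul hf).congr' ?_
  filter_upwards [hf_atTop.eventually_ne_atTop 0] with x hx
  exact div_mul_div_cancel₀ hx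

theorem strictAntiOn_comp_div (hf_pos : ∀ x, 0 < x → 0 < f x) (hg_pos : ∀ y, 0 < y → 0 < g y)
    (hf : MonotoneOn f (Ioi 0)) (hf_div : StrictAntiOn (fun x => f x / x) (Ioi 0))
    (hg_div : AntitoneOn (fun y => g y / y) (Ioi 0)) :
    StrictAntiOn (fun x => g (f x) / x) (Ioi 0) := by
  intro x (hx : 0 < x) y (hy : 0 < y) hxy
  have hfx := hf_pos x hx
  have hfy := hf_pos y hy
  calc g (f y) / y = g (f y) / f y * (f y / y) := (div_mul_div_cancel₀ hfy.ne').symm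
    _ < g (f x) / f x * (f x / x) :=
      mul_lt_mul' (hg_div hfx hfy (hf hx hy hxy.le)) (hf_div hx hy hxy)
        (div_pos hfy hy).le (div_pos (hg_pos _ hfx) hfx)
    _ = g (f x) / x := div_mul_div_cancel₀ hfx.ne'

end Composition

theorem existsUnique_pos_zero_of_tendsto_div {F : ℝ → ℝ} {L : ℝ}
    (hF : ContinuousOn F (Ici 0)) (h0 : F 0 < 0)
    (hlim : Tendsto (fun x => F x / x) atTop (𝓝 L)) (hL : 0 < L)
    (hinj : InjOn (fun x => F x / x) (Ioi 0)) :
    ∃! x, 0 < x ∧ F x = 0 := by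
  obtain ⟨b, hb_div, hb⟩ :=
    ((hlim.eventually (eventually_gt_nhds hL)).and (eventually_gt_atTop 0)).exists
  have hFb : 0 < F b := (div_pos_iff_of_pos_right hb).1 hb_div
  obtain ⟨x, hx, hFx⟩ := intermediate_value_Icc hb.le (hF.mono Icc_subset_Ici_self)
    ⟨h0.le, hFb.le⟩
  have hx0 : 0 < x := lt_of_le_of_ne hx.1 (by rintro rfl; exact h0.ne hFx)
  refine ⟨x, ⟨hx0, hFx⟩, fun y ⟨hy, hFy⟩ => hinj hy hx0 ?_⟩
  simp only [hFy, hFx, zero_div]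

noncomputable section

/-- The larger root of `d y² - (a + m x) y + c / 4`. -/
def upperRoot (a m c d x : ℝ) : ℝ :=
  (a + m * x + √((a + m * x) ^ 2 - c)) / (2 * d)

def upperRootSlope (a m c d t : ℝ) : ℝ :=
  (m + a * t + √((m + a * t) ^ 2 - c * t ^ 2)) / (2 * d)

end

namespace upperRootSlope

variable {a m c d : ℝ}

theorem continuous (a m c d : ℝ) : Continuous (upperRootSlope a m c d) := by
  unfold upperRootSlope
  fun_prop

theorem zero (hm : 0 ≤ m) : upperRootSlope a m c d 0 = m / d := by
  rw [upperRootSlope, mul_zero, add_zero, zero_pow two_ne_zero, mul_zero, sub_zero,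
    Real.sqrt_sq hm, ← two_mul, mul_div_mul_left _ _ two_ne_zero]

theorem strictMonoOn (ha : 0 < a) (hm : 0 ≤ m) (hd : 0 < d) (hca : c ≤ a ^ 2) :
    StrictMonoOn (upperRootSlope a m c d) (Ici 0) := by
  intro s (hs : 0 ≤ s) t _ hst
  -- the discriminant is `m² + 2amt + (a² - c)t²`
  have hdisc : (m + a * s) ^ 2 - c * s ^ 2 ≤ (m + a * t) ^ 2 - c * t ^ 2 := by
    have hsq : s ^ 2 ≤ t ^ 2 := pow_le_pow_left₀ hs hst.le 2
    nlinarith [mul_le_mul_of_nonneg_left hst.le (mul_nonneg ha.le hm),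
      mul_le_mul_of_nonneg_left hsq (sub_nonneg.2 hca)]
  unfold upperRootSlope
  gcongr ?_ / _
  exact add_lt_add_of_lt_of_le (by gcongr) (Real.sqrt_le_sqrt hdisc)

end upperRootSlope

namespace upperRoot

variable {a m c d : ℝ}

theorem pos (ha : 0 < a) (hm : 0 ≤ m) (hd : 0 < d) {x : ℝ} (hx : 0 ≤ x) :
    0 < upperRoot a m c d x := by
  unfold upperRoot
  positivity

theorem continuous (a m c d : ℝ) : Continuous (upperRoot a m c d) := by
  unfold upperRoot
  fun_prop

theorem monotoneOn (ha : 0 ≤ a) (hm : 0 ≤ m) (hd : 0 ≤ d) :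
    MonotoneOn (upperRoot a m c d) (Ici 0) := by
  intro x (hx : 0 ≤ x) y _ hxy
  have hlin : a + m * x ≤ a + m * y := by gcongr
  have hx0 : 0 ≤ a + m * x := add_nonneg ha (mul_nonneg hm hx)
  unfold upperRoot
  gcongr

theorem div_eq_slope {x : ℝ} (hx : 0 < x) :
    upperRoot a m c d x / x = upperRootSlope a m c d x⁻¹ := by
  have hsqrt : √((a + m * x) ^ 2 - c) / x = √((m + a * x⁻¹) ^ 2 - c * x⁻¹ ^ 2) := calc
    √((a + m * x) ^ 2 - c) / x = √((a + m * x) ^ 2 - c) / √(x ^ 2) := by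
      rw [Real.sqrt_sq hx.le]
    _ = √(((a + m * x) ^ 2 - c) / x ^ 2) := (Real.sqrt_div' _ (sq_nonneg x)).symm
    _ = √((m + a * x⁻¹) ^ 2 - c * x⁻¹ ^ 2) := by
      congr 1
      field_simp
      ring
  have hlin : (a + m * x) / x = m + a * x⁻¹ := by
    field_simp
    ring
  rw [upperRoot, upperRootSlope, div_right_comm, add_div, hlin, hsqrt]

theorem tendsto_div_atTop (hm : 0 ≤ m) :
    Tendsto (fun x => upperRoot a m c d x / x) atTop (𝓝 (m / d)) := by
  have hslope : Tendsto (fun x : ℝ => upperRootSlope a m c d x⁻¹) atTop (𝓝 (m / d)) := by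
    rw [← upperRootSlope.zero hm]
    exact ((upperRootSlope.continuous a m c d).tendsto 0).comp tendsto_inv_atTop_zero
  refine hslope.congr' ?_
  filter_upwards [Ioi_mem_atTop 0] with x hx
  exact (div_eq_slope hx).symm

theorem strictAntiOn_div (ha : 0 < a) (hm : 0 ≤ m) (hd : 0 < d) (hca : c ≤ a ^ 2) :
    StrictAntiOn (fun x => upperRoot a m c d x / x) (Ioi 0) := by
  have h := (upperRootSlope.strictMonoOn ha hm hd hca).comp_strictAntiOn strictAntiOn_inv_pos
    fun x (hx : 0 < x) => (inv_pos.2 hx).le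
  exact h.congr fun x hx => (div_eq_slope hx).symm

theorem tendsto_comp_div_atTop {a₁ a₂ m₁ m₂ c₁ c₂ d₁ d₂ : ℝ} (hm₁ : 0 ≤ m₁) (hm₂ : 0 < m₂)
    (hd₂ : 0 < d₂) :
    Tendsto (fun x => upperRoot a₁ m₁ c₁ d₁ (upperRoot a₂ m₂ c₂ d₂ x) / x) atTop
      (𝓝 (m₁ / d₁ * (m₂ / d₂))) :=
  _root_.tendsto_comp_div_atTop (div_pos hm₂ hd₂) (tendsto_div_atTop hm₂.le)
    (tendsto_div_atTop hm₁)

theorem strictAntiOn_comp_div {a₁ a₂ m₁ m₂ c₁ c₂ d₁ d₂ : ℝ}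
    (ha₁ : 0 < a₁) (hm₁ : 0 ≤ m₁) (hd₁ : 0 < d₁) (hc₁ : c₁ ≤ a₁ ^ 2)
    (ha₂ : 0 < a₂) (hm₂ : 0 ≤ m₂) (hd₂ : 0 < d₂) (hc₂ : c₂ ≤ a₂ ^ 2) :
    StrictAntiOn (fun x => upperRoot a₁ m₁ c₁ d₁ (upperRoot a₂ m₂ c₂ d₂ x) / x) (Ioi 0) :=
  _root_.strictAntiOn_comp_div (fun _ hx => pos ha₂ hm₂ hd₂ hx.le)
    (fun _ hy => pos ha₁ hm₁ hd₁ hy.le) ((monotoneOn ha₂.le hm₂ hd₂.le).mono Ioi_subset_Ici_self)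
    (strictAntiOn_div ha₂ hm₂ hd₂ hc₂) (strictAntiOn_div ha₁ hm₁ hd₁ hc₁).antitoneOn

end upperRoot

theorem fixed_point_existence_uniqueness_general (D₁ D₂ K₁ K₂ H A B γ : ℝ)
    (hD₁ : 0 < D₁) (hD₂ : 0 < D₂) (hH : 0 < H)
    (hA : 0 < A) (hB : 0 < B) (hγ : 0 < γ)
    (hcs : γ ^ 2 * H ^ 2 < D₁ * D₂)
    (hA2 : 4 * K₁ * D₁ ≤ A ^ 2) (hB2 : 4 * K₂ * D₂ ≤ B ^ 2)
    (Q₁ Q₂ g₁ g₂ F : ℝ → ℝ)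
    (hQ₁ : ∀ Y, Q₁ Y = A + γ * H * Y) (hQ₂ : ∀ X, Q₂ X = B + γ * H * X)
    (hg₁ : ∀ Y, g₁ Y = (Q₁ Y + Real.sqrt ((Q₁ Y) ^ 2 - 4 * K₁ * D₁)) / (2 * D₁))
    (hg₂ : ∀ X, g₂ X = (Q₂ X + Real.sqrt ((Q₂ X) ^ 2 - 4 * K₂ * D₂)) / (2 * D₂))
    (hF : ∀ X, F X = X - g₁ (g₂ X)) :
    F 0 < 0 ∧
    Filter.Tendsto (fun X => F X / X) Filter.atTop
      (nhds (1 - γ ^ 2 * H ^ 2 / (D₁ * D₂))) ∧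
    0 < 1 - γ ^ 2 * H ^ 2 / (D₁ * D₂) ∧
    StrictMonoOn (fun X => F X / X) (Set.Ioi (0 : ℝ)) ∧
    (∃! X : ℝ, 0 < X ∧ F X = 0) := by
  have hm : 0 < γ * H := mul_pos hγ hH
  have hg₁_eq : g₁ = upperRoot A (γ * H) (4 * K₁ * D₁) D₁ := funext fun Y => by
    rw [hg₁, hQ₁, upperRoot]
  have hg₂_eq : g₂ = upperRoot B (γ * H) (4 * K₂ * D₂) D₂ := funext fun X => by
    rw [hg₂, hQ₂, upperRoot]
  subst hg₁_eq hg₂_eq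
  have hF_div : EqOn (fun X => 1 - upperRoot A (γ * H) (4 * K₁ * D₁) D₁
      (upperRoot B (γ * H) (4 * K₂ * D₂) D₂ X) / X) (fun X => F X / X) (Ioi 0) :=
    fun X (hX : 0 < X) => by simp only [hF, sub_div, div_self hX.ne']
  have hF0 : F 0 < 0 := by
    rw [hF, zero_sub, neg_neg_iff_pos]
    exact upperRoot.pos hA hm.le hD₁ (upperRoot.pos hB hm.le hD₂ le_rfl).le
  have hF_lim : Tendsto (fun X => F X / X) atTop (𝓝 (1 - γ ^ 2 * H ^ 2 / (D₁ * D₂))) := by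
    convert (tendsto_const_nhds.sub (upperRoot.tendsto_comp_div_atTop hm.le hm hD₂)).congr'
      (eventuallyEq_of_mem (Ioi_mem_atTop 0) hF_div) using 2
    ring
  have hL : 0 < 1 - γ ^ 2 * H ^ 2 / (D₁ * D₂) := by
    rwa [sub_pos, div_lt_one (by positivity)]
  have hF_mono : StrictMonoOn (fun X => F X / X) (Ioi 0) :=
    ((upperRoot.strictAntiOn_comp_div hA hm.le hD₁ hA2 hB hm.le hD₂ hB2).neg.const_add 1).congr
      hF_div
  have hF_cont : Continuous F := by
    rw [funext hF]
    exact continuous_id.sub ((upperRoot.continuous _ _ _ _).comp (upperRoot.continuous _ _ _ _))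
  exact ⟨hF0, hF_lim, hL, hF_mono,
    existsUnique_pos_zero_of_tendsto_div hF_cont.continuousOn hF0 hF_lim hL hF_mono.injOn⟩

theorem fixed_point_existence_uniqueness (D₁ D₂ K₁ K₂ H A B γ : ℝ)
    (hD₁ : 0 < D₁) (hD₂ : 0 < D₂) (hK₁ : 0 < K₁) (hK₂ : 0 < K₂) (hH : 0 < H)
    (hA : 0 < A) (hB : 0 < B) (hγ : 0 < γ) (hγ1 : γ < 1)
    (hcs : γ ^ 2 * H ^ 2 < D₁ * D₂)
    (hA2 : 4 * K₁ * D₁ ≤ A ^ 2) (hB2 : 4 * K₂ * D₂ ≤ B ^ 2)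
    (Q₁ Q₂ g₁ g₂ F : ℝ → ℝ)
    (hQ₁ : ∀ Y, Q₁ Y = A + γ * H * Y) (hQ₂ : ∀ X, Q₂ X = B + γ * H * X)
    (hg₁ : ∀ Y, g₁ Y = (Q₁ Y + Real.sqrt ((Q₁ Y) ^ 2 - 4 * K₁ * D₁)) / (2 * D₁))
    (hg₂ : ∀ X, g₂ X = (Q₂ X + Real.sqrt ((Q₂ X) ^ 2 - 4 * K₂ * D₂)) / (2 * D₂))
    (hF : ∀ X, F X = X - g₁ (g₂ X)) :
    F 0 < 0 ∧
    Filter.Tendsto (fun X => F X / X) Filter.atTop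
      (nhds (1 - γ ^ 2 * H ^ 2 / (D₁ * D₂))) ∧
    0 < 1 - γ ^ 2 * H ^ 2 / (D₁ * D₂) ∧
    StrictMonoOn (fun X => F X / X) (Set.Ioi (0 : ℝ)) ∧
    (∃! X : ℝ, 0 < X ∧ F X = 0) :=
  fixed_point_existence_uniqueness_general D₁ D₂ K₁ K₂ H A B γ hD₁ hD₂ hH hA hB hγ hcs hA2 hB2 Q₁ Q₂
    g₁ g₂ F hQ₁ hQ₂ hg₁ hg₂ hF
end

section
/- Suppose a nonnegative C² function W on {x ∈ ℝ² : |x| ≥ R} satisfies ΔW ≥ m² W for some m > 0, and W(x) → 0 as |x| → ∞. Then for every ε ∈ (0,1) there is a constant C > 0 with W(x) ≤ C e^{−m(1−ε)|x|} for all |x| ≥ R. -/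
/-! Put `α = m(1 - ε)`. Away from the origin the radial function `e^{-α|x|}` satisfies
`Δ e^{-α|x|} = (α² - α/|x|) e^{-α|x|} ≤ m² e^{-α|x|}`, so it is a supersolution of `Δ - m²`, while
`W` is a subsolution. Take `C` so large that `C e^{-α|x|} ≥ W` on the circle `|x| = R`. The
difference `W - C e^{-α|x|}` tends to `0` at infinity, so if it were positive somewhere it would
attain a positive maximum at some `|x₀| > R`; there its Laplacian is `≤ 0` but also
`≥ m² (W - C e^{-α|x|})(x₀) > 0`. -/

open Filter

noncomputable def laplacian (U : EuclideanSpace ℝ (Fin 2) → ℝ)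
    (x : EuclideanSpace ℝ (Fin 2)) : ℝ :=
  ∑ i : Fin 2,
    fderiv ℝ (fun y => fderiv ℝ U y (EuclideanSpace.single i 1)) x (EuclideanSpace.single i 1)

open Topology
open scoped Laplacian RealInnerProductSpace

theorem IsLocalMax.deriv_deriv_nonpos {f : ℝ → ℝ} {a : ℝ} (h : IsLocalMax f a)
    (hf : ContinuousAt f a) : deriv (deriv f) a ≤ 0 := by
  by_contra! hpos
  have hconst : f =ᶠ[𝓝 a] fun _ => f a := by
    filter_upwards [h, isLocalMin_of_deriv_deriv_pos hpos h.deriv_eq_zero hf] with t hmax hmin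
    exact le_antisymm hmax hmin
  have : deriv (deriv f) a = 0 := by
    rw [hconst.deriv.deriv_eq]
    simp
  exact hpos.ne' this

theorem IsLocalMax.fderiv_fderiv_apply_nonpos {E : Type*} [NormedAddCommGroup E]
    [NormedSpace ℝ E] {u : E → ℝ} {x : E} (h : IsLocalMax u x) (hu : ContDiffAt ℝ 2 u x)
    (v : E) : fderiv ℝ (fderiv ℝ u) x v v ≤ 0 := by
  set line : ℝ → E := fun t => x + t • v
  have hline : ∀ t, HasDerivAt line v t := fun t => by
    have := ((hasDerivAt_id t).smul_const v).const_add x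
    rwa [one_smul] at this
  have hline0 : line 0 = x := by simp [line]
  have hline_tendsto : Tendsto line (𝓝 0) (𝓝 x) := hline0 ▸ (hline 0).continuousAt.tendsto
  have hderiv : deriv (u ∘ line) =ᶠ[𝓝 0] fun t => fderiv ℝ u (line t) v := by
    filter_upwards [hline_tendsto.eventually (hu.eventually (by norm_num))] with t ht
    exact ((ht.differentiableAt (by norm_num)).hasFDerivAt.comp_hasDerivAt t (hline t)).deriv
  have hsecond : HasDerivAt (fun t => fderiv ℝ u (line t) v) (fderiv ℝ (fderiv ℝ u) x v v) 0 := by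
    have hfd : HasFDerivAt (fderiv ℝ u) (fderiv ℝ (fderiv ℝ u) x) (line 0) := by
      rw [hline0]
      exact ((hu.fderiv_right (m := 1) (by norm_num)).differentiableAt one_ne_zero).hasFDerivAt
    exact (hfd.comp_hasDerivAt 0 (hline 0)).clm_apply (hasDerivAt_const 0 v) |>.congr_deriv
      (by simp)
  have hmax : IsLocalMax (u ∘ line) 0 :=
    (hline0 ▸ h).comp_continuous (hline 0).continuousAt
  have hcont : ContinuousAt (u ∘ line) 0 :=
    (hline0 ▸ hu.continuousAt).comp (hline 0).continuousAt
  simpa [hderiv.deriv_eq, hsecond.deriv] using hmax.deriv_deriv_nonpos hcont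

theorem nonpos_on_exterior_of_tendsto_cocompact {E : Type*} [NormedAddCommGroup E]
    {u : E → ℝ} {R : ℝ} (hu : ContinuousOn u {x | R ≤ ‖x‖})
    (hlim : Tendsto u (cocompact E) (𝓝 0)) (hbdry : ∀ x, ‖x‖ = R → u x ≤ 0)
    (hmax : ∀ x, R < ‖x‖ → IsLocalMax u x → u x ≤ 0) {x : E} (hx : R ≤ ‖x‖) : u x ≤ 0 := by
  by_contra! hpos
  obtain ⟨x₀, hx₀, hmax₀⟩ := hu.exists_isMaxOn' (isClosed_le continuous_const continuous_norm)
    hx ((hlim.eventually (eventually_le_nhds hpos)).filter_mono inf_le_left)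
  have hx₀pos : 0 < u x₀ := hpos.trans_le (hmax₀ hx)
  rcases (show R ≤ ‖x₀‖ from hx₀).eq_or_lt with hR | hR
  · exact (hbdry x₀ hR.symm).not_gt hx₀pos
  · have hnhds : {y : E | R ≤ ‖y‖} ∈ 𝓝 x₀ :=
      continuous_norm.continuousAt.eventually (eventually_ge_nhds hR)
    exact (hmax x₀ hR (hmax₀.isLocalMax hnhds)).not_gt hx₀pos

theorem tendsto_exp_neg_mul_norm_cocompact {E : Type*} [NormedAddCommGroup E] [ProperSpace E]
    {α : ℝ} (hα : 0 < α) :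
    Tendsto (fun y : E => Real.exp (-α * ‖y‖)) (cocompact E) (𝓝 0) :=
  Real.tendsto_exp_atBot.comp (tendsto_norm_cocompact_atTop.const_mul_atTop_of_neg (by linarith))

theorem exists_pos_le_mul_exp_neg_mul_norm_on_sphere {E : Type*} [NormedAddCommGroup E]
    [ProperSpace E] {W : E → ℝ} {R : ℝ} (hW : ContinuousOn W (Metric.sphere 0 R)) (α : ℝ) :
    ∃ C : ℝ, 0 < C ∧ ∀ y, ‖y‖ = R → W y ≤ C * Real.exp (-α * ‖y‖) := by
  obtain ⟨M, hM⟩ := (isCompact_sphere 0 R).bddAbove_image hW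
  refine ⟨max M 1 * Real.exp (α * R), by positivity, fun y hy => ?_⟩
  rw [hy, mul_assoc, ← Real.exp_add, neg_mul, add_neg_cancel, Real.exp_zero, mul_one]
  exact (hM ⟨y, mem_sphere_zero_iff_norm.2 hy, rfl⟩).trans (le_max_left M 1)

section InnerProductSpace

variable {E : Type*} [NormedAddCommGroup E] [InnerProductSpace ℝ E]

theorem hasFDerivAt_norm {x : E} (hx : x ≠ 0) :
    HasFDerivAt (‖·‖) (‖x‖⁻¹ • innerSL ℝ x) x := by
  have hsq := (hasStrictFDerivAt_norm_sq x).hasFDerivAt.sqrt (by positivity)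
  simp only [Real.sqrt_sq (norm_nonneg _)] at hsq
  convert hsq using 1
  ext v
  simp [field]

theorem HasDerivAt.hasFDerivAt_comp_norm {φ : ℝ → ℝ} {d : ℝ} {x : E} (hx : x ≠ 0)
    (hφ : HasDerivAt φ d ‖x‖) :
    HasFDerivAt (fun y => φ ‖y‖) ((d / ‖x‖) • innerSL ℝ x) x := by
  refine (hφ.comp_hasFDerivAt x (hasFDerivAt_norm hx)).congr_fderiv ?_
  ext v
  simp [smul_smul, div_eq_mul_inv]

theorem contDiffAt_exp_neg_mul_norm {n : WithTop ℕ∞} (α : ℝ) {x : E} (hx : x ≠ 0) :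
    ContDiffAt ℝ n (fun y : E => Real.exp (-α * ‖y‖)) x :=
  (contDiffAt_const.mul (contDiffAt_norm ℝ hx)).exp

variable [FiniteDimensional ℝ E]

theorem IsLocalMax.laplacian_nonpos {u : E → ℝ} {x : E}
    (h : IsLocalMax u x) (hu : ContDiffAt ℝ 2 u x) : Δ u x ≤ 0 := by
  rw [InnerProductSpace.laplacian_eq_iteratedFDeriv_stdOrthonormalBasis]
  exact Finset.sum_nonpos fun i _ => by
    simpa [iteratedFDeriv_two_apply] using h.fderiv_fderiv_apply_nonpos hu _

theorem IsLocalMax.nonpos_of_mul_le_laplacian {u : E → ℝ} {x : E}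
    {c : ℝ} (h : IsLocalMax u x) (hu : ContDiffAt ℝ 2 u x) (hc : 0 < c) (hΔ : c * u x ≤ Δ u x) :
    u x ≤ 0 :=
  nonpos_of_mul_nonpos_right (hΔ.trans (h.laplacian_nonpos hu)) hc

theorem mul_le_laplacian_sub {f g : E → ℝ} {x : E} {c : ℝ}
    (hf : ContDiffAt ℝ 2 f x) (hg : ContDiffAt ℝ 2 g x)
    (hfΔ : c * f x ≤ Δ f x) (hgΔ : Δ g x ≤ c * g x) : c * (f - g) x ≤ Δ (f - g) x := by
  rw [hf.laplacian_sub hg, Pi.sub_apply, mul_sub]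
  linarith

theorem le_on_exterior_of_laplacian_comparison {u v : E → ℝ} {R c : ℝ}
    (hc : 0 < c) (hu : ContinuousOn u {x | R ≤ ‖x‖}) (hv : ContinuousOn v {x | R ≤ ‖x‖})
    (hu₂ : ∀ x, R < ‖x‖ → ContDiffAt ℝ 2 u x) (hv₂ : ∀ x, R < ‖x‖ → ContDiffAt ℝ 2 v x)
    (huΔ : ∀ x, R < ‖x‖ → c * u x ≤ Δ u x) (hvΔ : ∀ x, R < ‖x‖ → Δ v x ≤ c * v x)
    (hlim : Tendsto (u - v) (cocompact E) (𝓝 0)) (hbdry : ∀ x, ‖x‖ = R → u x ≤ v x)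
    {x : E} (hx : R ≤ ‖x‖) : u x ≤ v x := by
  refine sub_nonpos.1 (nonpos_on_exterior_of_tendsto_cocompact (hu.sub hv) hlim
    (fun y hy => sub_nonpos.2 (hbdry y hy)) (fun y hy hmax => ?_) hx)
  exact hmax.nonpos_of_mul_le_laplacian ((hu₂ y hy).sub (hv₂ y hy)) hc
    (mul_le_laplacian_sub (hu₂ y hy) (hv₂ y hy) (huΔ y hy) (hvΔ y hy))

theorem laplacian_comp_norm {φ φ' : ℝ → ℝ} {φ'' : ℝ} {x : E}
    (hx : x ≠ 0) (hφ : ∀ᶠ r in 𝓝 ‖x‖, HasDerivAt φ (φ' r) r) (hφ' : HasDerivAt φ' φ'' ‖x‖) :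
    Δ (fun y : E => φ ‖y‖) x = φ'' + (Module.finrank ℝ E - 1) * φ' ‖x‖ / ‖x‖ := by
  have hr : 0 < ‖x‖ := norm_pos_iff.2 hx
  have hgrad : fderiv ℝ (fun y => φ ‖y‖) =ᶠ[𝓝 x]
      fun y => (φ' ‖y‖ / ‖y‖) • innerSL ℝ y := by
    filter_upwards [eventually_ne_nhds hx, continuous_norm.continuousAt.eventually hφ]
      with y hy0 hy
    exact (hy.hasFDerivAt_comp_norm hy0).fderiv
  have hquot : HasDerivAt (fun s => φ' s / s) ((φ'' * ‖x‖ - φ' ‖x‖) / ‖x‖ ^ 2) ‖x‖ := by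
    simpa using hφ'.fun_div (hasDerivAt_id _) hr.ne'
  have hhess := (hquot.hasFDerivAt_comp_norm hx).fun_smul (innerSL ℝ (E := E)).hasFDerivAt
  -- `innerSL ℝ` is conjugate-linear in its first argument; over `ℝ` it is linear only up to defeq
  have hinner : ∀ v w : E, (innerSL ℝ : E →L[ℝ] E →L[ℝ] ℝ) v w = ⟪v, w⟫ := fun _ _ => rfl
  rw [InnerProductSpace.laplacian_eq_iteratedFDeriv_stdOrthonormalBasis]
  simp only [iteratedFDeriv_two_apply, Matrix.cons_val_zero, Matrix.cons_val_one,
    hgrad.fderiv_eq, hhess.fderiv, add_apply, smul_apply, ContinuousLinearMap.smulRight_apply,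
    smul_eq_mul, Finset.sum_add_distrib, hinner, real_inner_self_eq_norm_sq,
    OrthonormalBasis.norm_eq_one, mul_assoc, ← Finset.mul_sum, ← sq,
    OrthonormalBasis.sum_sq_inner_left, one_pow, Finset.sum_const, Finset.card_univ,
    Fintype.card_fin, nsmul_eq_mul, mul_one]
  field_simp
  ring

theorem laplacian_exp_neg_mul_norm_le {α : ℝ} (hα : 0 ≤ α) {x : E}
    (hx : x ≠ 0) : Δ (fun y : E => Real.exp (-α * ‖y‖)) x ≤ α ^ 2 * Real.exp (-α * ‖x‖) := by
  have : Nontrivial E := nontrivial_of_ne x 0 hx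
  set n : ℝ := (Module.finrank ℝ E : ℝ)
  have hn : 1 ≤ n := Nat.one_le_cast.2 Module.finrank_pos
  have hderiv : ∀ r, HasDerivAt (fun s => Real.exp (-α * s)) (-α * Real.exp (-α * r)) r :=
    fun r => by simpa [mul_comm] using ((hasDerivAt_id r).const_mul (-α)).exp
  rw [laplacian_comp_norm hx (Eventually.of_forall hderiv) ((hderiv ‖x‖).const_mul (-α))]
  have hcorr : 0 ≤ (n - 1) * (α * Real.exp (-α * ‖x‖)) / ‖x‖ :=
    div_nonneg (mul_nonneg (sub_nonneg.2 hn) (by positivity)) (norm_nonneg _)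
  linarith [show (n - 1) * (-α * Real.exp (-α * ‖x‖)) / ‖x‖
    = -((n - 1) * (α * Real.exp (-α * ‖x‖)) / ‖x‖) by ring]

theorem laplacian_smul_exp_neg_mul_norm_le {α β C : ℝ} (hα : 0 ≤ α) (hαβ : α ≤ β) (hC : 0 ≤ C)
    {x : E} (hx : x ≠ 0) :
    Δ (C • fun y : E => Real.exp (-α * ‖y‖)) x
      ≤ β ^ 2 * (C • fun y : E => Real.exp (-α * ‖y‖)) x := by
  rw [InnerProductSpace.laplacian_smul C (contDiffAt_exp_neg_mul_norm α hx), Pi.smul_apply,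
    smul_eq_mul, smul_eq_mul, mul_left_comm]
  refine mul_le_mul_of_nonneg_left ((laplacian_exp_neg_mul_norm_le hα hx).trans ?_) hC
  exact mul_le_mul_of_nonneg_right (pow_le_pow_left₀ hα hαβ 2) (Real.exp_pos _).le

end InnerProductSpace

theorem laplacian_eq_innerProductSpace_laplacian {U : EuclideanSpace ℝ (Fin 2) → ℝ} {x : EuclideanSpace ℝ (Fin 2)}
    (hU : ContDiffAt ℝ 2 U x) : laplacian U x = Δ U x := by
  have hfd : DifferentiableAt ℝ (fderiv ℝ U) x :=
    (hU.fderiv_right (m := 1) (by norm_num)).differentiableAt one_ne_zero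
  rw [InnerProductSpace.laplacian_eq_iteratedFDeriv_orthonormalBasis U
    (EuclideanSpace.basisFun (Fin 2) ℝ), laplacian]
  refine Finset.sum_congr rfl fun i _ => ?_
  rw [fderiv_clm_apply hfd (differentiableAt_const _)]
  simp [iteratedFDeriv_two_apply]

theorem exponential_decay_estimate_general (W : EuclideanSpace ℝ (Fin 2) → ℝ) (R m : ℝ)
    (hR : 0 < R) (hm : 0 < m)
    (hW : ContDiffOn ℝ 2 W {x | R ≤ ‖x‖})
    (hΔ : ∀ x, R ≤ ‖x‖ → m ^ 2 * W x ≤ laplacian W x)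
    (hdecay : Tendsto W (cocompact (EuclideanSpace ℝ (Fin 2))) (nhds 0)) :
    ∀ ε : ℝ, 0 < ε → ε < 1 → ∃ C : ℝ, 0 < C ∧
      ∀ x, R ≤ ‖x‖ → W x ≤ C * Real.exp (-m * (1 - ε) * ‖x‖) := by
  intro ε hε hε1
  set α := m * (1 - ε)
  have hα : 0 < α := mul_pos hm (by linarith)
  set F : EuclideanSpace ℝ (Fin 2) → ℝ := fun y => Real.exp (-α * ‖y‖)
  obtain ⟨C, hC, hbdry⟩ := exists_pos_le_mul_exp_neg_mul_norm_on_sphere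
    (hW.continuousOn.mono fun y hy => (mem_sphere_zero_iff_norm.1 hy).ge) α
  have hlim : Tendsto (W - C • F) (cocompact _) (𝓝 0) := by
    have h := hdecay.sub ((tendsto_exp_neg_mul_norm_cocompact hα).const_smul C)
    rwa [smul_zero, sub_zero] at h
  have hW₂ : ∀ y, R < ‖y‖ → ContDiffAt ℝ 2 W y := fun y hy =>
    hW.contDiffAt (continuous_norm.continuousAt.eventually (eventually_ge_nhds hy))
  have hy₀ : ∀ y : EuclideanSpace ℝ (Fin 2), R < ‖y‖ → y ≠ 0 := fun y hy =>
    norm_pos_iff.1 (hR.trans hy)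
  refine ⟨C, hC, fun x hx => ?_⟩
  rw [neg_mul m]
  exact le_on_exterior_of_laplacian_comparison (pow_pos hm 2) hW.continuousOn (by fun_prop)
    hW₂ (fun y hy => (contDiffAt_exp_neg_mul_norm α (hy₀ y hy)).const_smul C)
    (fun y hy => laplacian_eq_innerProductSpace_laplacian (hW₂ y hy) ▸ hΔ y hy.le)
    (fun y hy => laplacian_smul_exp_neg_mul_norm_le hα.le (by nlinarith) hC.le (hy₀ y hy))
    hlim hbdry hx

theorem exponential_decay_estimate (W : EuclideanSpace ℝ (Fin 2) → ℝ) (R m : ℝ)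
    (hR : 0 < R) (hm : 0 < m)
    (hW : ContDiffOn ℝ 2 W {x | R ≤ ‖x‖})
    (hWnonneg : ∀ x, R ≤ ‖x‖ → 0 ≤ W x)
    (hΔ : ∀ x, R ≤ ‖x‖ → m ^ 2 * W x ≤ laplacian W x)
    (hdecay : Tendsto W (cocompact (EuclideanSpace ℝ (Fin 2))) (nhds 0)) :
    ∀ ε : ℝ, 0 < ε → ε < 1 → ∃ C : ℝ, 0 < C ∧
      ∀ x, R ≤ ‖x‖ → W x ≤ C * Real.exp (-m * (1 - ε) * ‖x‖) :=
  exponential_decay_estimate_general W R m hR hm hW hΔ hdecay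
end
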